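/- Let d ≥ 2 be an integer. There exist a constant K and an integer N₀ such that for all N ≥ N₀, d · Σ_{λ' ∈ Λ_{N+1}} Σ_{i ∈ S(λ')} r_{λ'}(i)² ≤ (K/N²) · d · Σ_{λ' ∈ Λ_{N+1}} #S(λ') · ∏_{j=1}^d p_j(λ')². (In the notation of the paper's Lemma 1, u₂ = O(N^{−2}).) -/
import Mathlib


open Finset

/-- The value after index `i` in `λ`, with the convention `λ_{d+1} := 0`. -/
def nextVal (d : ℕ) (lam : Fin d → ℕ) (i : Fin d) : ℕ :=
  if h : (i : ℕ) + 1 < d then lam ⟨(i : ℕ) + 1, h⟩ else 0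

/-- `Λ_M`: nonincreasing `d`-tuples of natural numbers summing to `M`. -/
def Lam (d M : ℕ) : Finset (Fin d → ℕ) :=
  (Fintype.piFinset fun _ => Finset.range (M + 1)).filter
    (fun lam => (∀ i : Fin d, nextVal d lam i ≤ lam i) ∧ ∑ j, lam j = M)

/-- `P_M`: strictly decreasing `d`-tuples of positive naturals summing to `M`. -/
def PP (d M : ℕ) : Finset (Fin d → ℕ) :=
  (Lam d M).filter (fun lam => ∀ i : Fin d, nextVal d lam i < lam i)

/-- The gaps `p_j(λ) = λ_j - λ_{j+1}`. -/
def pgap (d : ℕ) (lam : Fin d → ℕ) (j : Fin d) : ℕ := lam j - nextVal d lam j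

/-- `S(λ)`: the set of indices `i` with `λ_i > λ_{i+1}`. -/
def SS (d : ℕ) (lam : Fin d → ℕ) : Finset (Fin d) :=
  Finset.univ.filter (fun i => nextVal d lam i < lam i)

/-- `λ - e_i`: decrease the `i`-th entry by one. -/
def dec (d : ℕ) (lam : Fin d → ℕ) (i : Fin d) : Fin d → ℕ :=
  Function.update lam i (lam i - 1)

/-- The previous index `i - 1`. -/
def prev (d : ℕ) (i : Fin d) : Fin d :=
  ⟨(i : ℕ) - 1, Nat.lt_of_le_of_lt (Nat.sub_le _ _) i.isLt⟩

/-- `p_E(λ) = ∏_{j ∉ E} p_j(λ)`. -/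
def pE (d : ℕ) (lam : Fin d → ℕ) (E : Finset (Fin d)) : ℕ :=
  ∏ j ∈ Eᶜ, pgap d lam j

/-- `r_{λ'}(i) = -p_{{i}}(λ') + (p_{{i-1}}(λ') - p_{{i,i-1}}(λ')` if `i > 1`, else `0)`. -/
def rr (d : ℕ) (lam : Fin d → ℕ) (i : Fin d) : ℤ :=
  -(pE d lam {i} : ℤ) +
    (if 0 < (i : ℕ) then
      ((pE d lam {prev d i} : ℤ) - (pE d lam ({i, prev d i} : Finset (Fin d)) : ℤ))
    else 0)

lemma mem_Lam_iff {d M : ℕ} {lam : Fin d → ℕ} :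
    lam ∈ Lam d M ↔ (∀ i, lam i ≤ M) ∧ (∀ i, nextVal d lam i ≤ lam i) ∧ ∑ j, lam j = M := by
  simp [Lam, Fintype.mem_piFinset, Nat.lt_succ_iff, and_assoc]

lemma pgap_le {d M : ℕ} {lam : Fin d → ℕ} (h : lam ∈ Lam d M) (j : Fin d) :
    pgap d lam j ≤ M := by
  have := (mem_Lam_iff.1 h).1 j
  unfold pgap; omega

lemma pE_le {d M : ℕ} {lam : Fin d → ℕ} (h : lam ∈ Lam d M) (hM : 1 ≤ M)
    {E : Finset (Fin d)} (hE : E.Nonempty) : pE d lam E ≤ M ^ (d - 1) := by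
  have h1 : pE d lam E ≤ M ^ (Eᶜ.card) := by
    unfold pE
    calc ∏ j ∈ Eᶜ, pgap d lam j ≤ ∏ _j ∈ Eᶜ, M :=
          Finset.prod_le_prod' fun j _ => pgap_le h j
      _ = M ^ (Eᶜ.card) := Finset.prod_const M
  refine h1.trans (Nat.pow_le_pow_right hM ?_)
  have : 1 ≤ E.card := Finset.card_pos.2 hE
  have := Finset.card_compl E
  simp [Fintype.card_fin] at this
  omega

lemma abs_rr_le {d M : ℕ} {lam : Fin d → ℕ} (h : lam ∈ Lam d M) (hM : 1 ≤ M) (i : Fin d) :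
    |rr d lam i| ≤ ((3 * M ^ (d - 1) : ℕ) : ℤ) := by
  have ha := pE_le h hM (E := {i}) (Finset.singleton_nonempty i)
  have hb := pE_le h hM (E := {prev d i}) (Finset.singleton_nonempty _)
  have hc := pE_le h hM (E := ({i, prev d i} : Finset (Fin d))) (Finset.insert_nonempty _ _)
  rw [abs_le]
  unfold rr
  constructor <;> split_ifs <;> omega

lemma rr_sq_le {d M : ℕ} {lam : Fin d → ℕ} (h : lam ∈ Lam d M) (hM : 1 ≤ M) (i : Fin d) :
    rr d lam i ^ 2 ≤ ((9 * M ^ (2 * (d - 1)) : ℕ) : ℤ) := by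
  have h1 := abs_rr_le h hM i
  have h2 : rr d lam i ^ 2 = |rr d lam i| ^ 2 := (sq_abs _).symm
  rw [h2]
  calc |rr d lam i| ^ 2 ≤ ((3 * M ^ (d - 1) : ℕ) : ℤ) ^ 2 :=
        pow_le_pow_left₀ (abs_nonneg _) h1 2
    _ = ((9 * M ^ (2 * (d - 1)) : ℕ) : ℤ) := by push_cast; ring

lemma card_SS_le {d : ℕ} (lam : Fin d → ℕ) : (SS d lam).card ≤ d := by
  classical
  calc (SS d lam).card ≤ (Finset.univ : Finset (Fin d)).card := Finset.card_le_card (Finset.filter_subset _ _)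
    _ = d := by simp
lemma card_Lam_le {d M : ℕ} (hd : 0 < d) : (Lam d M).card ≤ (M + 1) ^ (d - 1) := by
  classical
  set z : Fin d := ⟨0, hd⟩ with hz
  set T : Finset (Fin d → ℕ) :=
    Fintype.piFinset (fun i => if i = z then ({0} : Finset ℕ) else Finset.range (M + 1)) with hT
  have hmaps : ∀ lam ∈ Lam d M, Function.update lam z 0 ∈ T := by
    intro lam hlam
    rw [hT, Fintype.mem_piFinset]
    intro i
    by_cases hi : i = z
    · subst hi; simp
    · simp only [if_neg hi, Function.update_of_ne hi, Finset.mem_range, Nat.lt_succ_iff]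
      exact (mem_Lam_iff.1 hlam).1 i
  have hinj : Set.InjOn (fun lam => Function.update lam z 0) (Lam d M : Set (Fin d → ℕ)) := by
    intro lam hlam mu hmu heq
    simp only [Finset.coe_mem, Finset.mem_coe] at hlam hmu
    have hne : ∀ i, i ≠ z → lam i = mu i := by
      intro i hi
      have := congrFun heq i
      simpa [Function.update_of_ne hi] using this
    have hsum1 := (mem_Lam_iff.1 hlam).2.2
    have hsum2 := (mem_Lam_iff.1 hmu).2.2
    have h1 : lam z + ∑ i ∈ Finset.univ.erase z, lam i = M := by
      rw [Finset.add_sum_erase _ _ (Finset.mem_univ z)]; exact hsum1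
    have h2 : mu z + ∑ i ∈ Finset.univ.erase z, mu i = M := by
      rw [Finset.add_sum_erase _ _ (Finset.mem_univ z)]; exact hsum2
    have hs : ∑ i ∈ Finset.univ.erase z, lam i = ∑ i ∈ Finset.univ.erase z, mu i :=
      Finset.sum_congr rfl fun i hi => hne i (Finset.ne_of_mem_erase hi)
    funext i
    by_cases hi : i = z
    · subst hi; omega
    · exact hne i hi
  calc (Lam d M).card ≤ T.card := Finset.card_le_card_of_injOn _ hmaps hinj
    _ = (M + 1) ^ (d - 1) := by
        rw [hT, Fintype.card_piFinset]
        have : ∀ i : Fin d, ((if i = z then ({0} : Finset ℕ) else Finset.range (M + 1)).card)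
            = if i = z then 1 else M + 1 := by
          intro i; by_cases hi : i = z <;> simp [hi]
        rw [Finset.prod_congr rfl fun i _ => this i]
        rw [← Finset.prod_erase_mul Finset.univ _ (Finset.mem_univ z), if_pos rfl, mul_one]
        rw [Finset.prod_congr rfl (fun i hi => if_neg (Finset.ne_of_mem_erase hi)),
          Finset.prod_const, Finset.card_erase_of_mem (Finset.mem_univ z)]
        simp
def lamOf (d : ℕ) (q : Fin d → ℕ) : Fin d → ℕ :=
  fun i => ∑ k : Fin d, if (i : ℕ) ≤ (k : ℕ) then q k else 0

lemma lamOf_step (d : ℕ) (q : Fin d → ℕ) (i : Fin d) :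
    lamOf d q i = q i + ∑ k : Fin d, if (i : ℕ) + 1 ≤ (k : ℕ) then q k else 0 := by
  unfold lamOf
  have key : ∀ k : Fin d, (if (i : ℕ) ≤ (k : ℕ) then q k else 0)
      = (if k = i then q k else 0) + (if (i : ℕ) + 1 ≤ (k : ℕ) then q k else 0) := by
    intro k
    by_cases h1 : k = i
    · subst h1; simp
    · have h2 : (k : ℕ) ≠ (i : ℕ) := fun hh => h1 (Fin.ext hh)
      by_cases h3 : (i : ℕ) + 1 ≤ (k : ℕ)
      · rw [if_pos (by omega), if_neg h1, if_pos h3, zero_add]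
      · rw [if_neg (by omega), if_neg h1, if_neg h3, zero_add]
  rw [Finset.sum_congr rfl fun k _ => key k, Finset.sum_add_distrib,
    Finset.sum_ite_eq' Finset.univ i q, if_pos (Finset.mem_univ i)]

lemma nextVal_lamOf (d : ℕ) (q : Fin d → ℕ) (i : Fin d) :
    nextVal d (lamOf d q) i = ∑ k : Fin d, if (i : ℕ) + 1 ≤ (k : ℕ) then q k else 0 := by
  unfold nextVal
  split
  · rfl
  · symm
    apply Finset.sum_eq_zero
    intro k _
    rw [if_neg]
    have := k.isLt
    omega

lemma pgap_lamOf (d : ℕ) (q : Fin d → ℕ) (i : Fin d) :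
    pgap d (lamOf d q) i = q i := by
  rw [pgap, nextVal_lamOf, lamOf_step]
  omega

lemma sum_lamOf (d : ℕ) (q : Fin d → ℕ) :
    ∑ i, lamOf d q i = ∑ k : Fin d, ((k : ℕ) + 1) * q k := by
  unfold lamOf
  rw [Finset.sum_comm]
  apply Finset.sum_congr rfl
  intro k _
  have hk := k.isLt
  rw [Fin.sum_univ_eq_sum_range (fun i => if i ≤ (k : ℕ) then q k else 0) d,
    ← Finset.sum_filter]
  have hf : (Finset.range d).filter (fun i => i ≤ (k : ℕ)) = Finset.range ((k : ℕ) + 1) := by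
    ext x
    simp only [Finset.mem_filter, Finset.mem_range, Nat.lt_succ_iff]
    omega
  rw [hf, Finset.sum_const, Finset.card_range, smul_eq_mul]
set_option maxHeartbeats 1000000 in
lemma lower_bound (d N : ℕ) (hd : 2 ≤ d) (hN : 8 * d ^ 2 ≤ N) :
    (N / (4 * d ^ 2)) ^ (3 * (d - 1) + 2)
      ≤ ∑ lam ∈ Lam d (N + 1), (SS d lam).card * ∏ j, pgap d lam j ^ 2 := by
  classical
  have hd0 : 0 < d := by omega
  set m : ℕ := N / (4 * d ^ 2) with hm
  set z : Fin d := ⟨0, hd0⟩ with hz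
  -- basic numeric facts
  have hA : 4 * (d ^ 2 * m) ≤ N := by
    have := Nat.div_mul_le_self N (4 * d ^ 2)
    calc 4 * (d ^ 2 * m) = N / (4 * d ^ 2) * (4 * d ^ 2) := by rw [← hm]; ring
      _ ≤ N := this
  have hB : N ≤ 8 * (d ^ 2 * m) := by
    have h1 := Nat.div_add_mod N (4 * d ^ 2)
    have h2 : N % (4 * d ^ 2) < 4 * d ^ 2 := Nat.mod_lt N (by positivity)
    have h3 : 4 * d ^ 2 * (N / (4 * d ^ 2)) = 4 * (d ^ 2 * m) := by rw [← hm]; ring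
    have h4 : 8 * (d ^ 2 * m) = 2 * (4 * (d ^ 2 * m)) := by ring
    set a := d ^ 2 * m
    set r := N % (4 * d ^ 2)
    have h5 : 2 * (4 * d ^ 2) ≤ N := by omega
    omega
  have hmd : m ≤ d ^ 2 * m := Nat.le_mul_of_pos_left m (by positivity)
  have hm1 : 1 ≤ m := by
    rw [hm]
    refine (Nat.one_le_div_iff (by positivity)).2 (by omega)
  -- the parameter set
  set T : Finset (Fin d → ℕ) :=
    Fintype.piFinset (fun i => if i = z then ({0} : Finset ℕ) else Finset.Ico m (2 * m)) with hT
  -- the map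
  set qf : (Fin d → ℕ) → (Fin d → ℕ) := fun c =>
    Function.update c z (N + 1 - ∑ k ∈ Finset.univ.erase z, ((k : ℕ) + 1) * c k) with hqf
  set F : (Fin d → ℕ) → (Fin d → ℕ) := fun c => lamOf d (qf c) with hF
  -- facts about c ∈ T
  have hcz : ∀ c ∈ T, c z = 0 := by
    intro c hc
    have := (Fintype.mem_piFinset.1 hc) z
    simpa using this
  have hck : ∀ c ∈ T, ∀ k : Fin d, k ≠ z → m ≤ c k ∧ c k < 2 * m := by
    intro c hc k hk
    have := (Fintype.mem_piFinset.1 hc) k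
    rw [if_neg hk] at this
    exact Finset.mem_Ico.1 this
  have hS1 : ∀ c ∈ T, ∑ k ∈ Finset.univ.erase z, ((k : ℕ) + 1) * c k ≤ 2 * (d ^ 2 * m) := by
    intro c hc
    have hterm : ∀ k ∈ Finset.univ.erase z, ((k : ℕ) + 1) * c k ≤ d * (2 * m) := by
      intro k hk
      have h1 : (k : ℕ) + 1 ≤ d := k.isLt
      have h2 : c k ≤ 2 * m := le_of_lt (hck c hc k (Finset.ne_of_mem_erase hk)).2
      exact Nat.mul_le_mul h1 h2
    calc ∑ k ∈ Finset.univ.erase z, ((k : ℕ) + 1) * c k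
        ≤ (Finset.univ.erase z).card • (d * (2 * m)) := Finset.sum_le_card_nsmul _ _ _ hterm
      _ = (d - 1) * (d * (2 * m)) := by
          rw [Finset.card_erase_of_mem (Finset.mem_univ z), smul_eq_mul]; simp
      _ ≤ d * (d * (2 * m)) := Nat.mul_le_mul_right _ (Nat.sub_le d 1)
      _ = 2 * (d ^ 2 * m) := by ring
  -- q values
  have hqz : ∀ c ∈ T, qf c z = N + 1 - ∑ k ∈ Finset.univ.erase z, ((k : ℕ) + 1) * c k := by
    intro c hc; rw [hqf]; simp [Function.update_self]
  have hqk : ∀ c ∈ T, ∀ k : Fin d, k ≠ z → qf c k = c k := by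
    intro c hc k hk; rw [hqf]; simp [Function.update_of_ne hk]
  have hqm : ∀ c ∈ T, ∀ k : Fin d, m ≤ qf c k := by
    intro c hc k
    by_cases hk : k = z
    · subst hk
      rw [hqz c hc]
      have := hS1 c hc
      set a := d ^ 2 * m
      set S1 := ∑ k ∈ Finset.univ.erase z, ((k : ℕ) + 1) * c k
      omega
    · rw [hqk c hc k hk]; exact (hck c hc k hk).1
  -- total weighted sum of q
  have hqsum : ∀ c ∈ T, ∑ k : Fin d, ((k : ℕ) + 1) * qf c k = N + 1 := by
    intro c hc
    rw [← Finset.add_sum_erase _ _ (Finset.mem_univ z)]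
    have he : ∑ k ∈ Finset.univ.erase z, ((k : ℕ) + 1) * qf c k
        = ∑ k ∈ Finset.univ.erase z, ((k : ℕ) + 1) * c k :=
      Finset.sum_congr rfl fun k hk => by rw [hqk c hc k (Finset.ne_of_mem_erase hk)]
    rw [he, hqz c hc]
    have h1 := hS1 c hc
    have h2 : (z : ℕ) = 0 := rfl
    rw [h2]
    set a := d ^ 2 * m
    set S1 := ∑ k ∈ Finset.univ.erase z, ((k : ℕ) + 1) * c k
    omega
  -- membership
  have hmem : ∀ c ∈ T, F c ∈ Lam d (N + 1) := by
    intro c hc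
    show lamOf d (qf c) ∈ Lam d (N + 1)
    rw [mem_Lam_iff]
    refine ⟨?_, ?_, ?_⟩
    · intro i
      calc lamOf d (qf c) i ≤ ∑ k : Fin d, ((k : ℕ) + 1) * qf c k := by
            unfold lamOf
            apply Finset.sum_le_sum
            intro k _
            split
            · exact Nat.le_mul_of_pos_left _ (by omega)
            · exact Nat.zero_le _
        _ = N + 1 := hqsum c hc
    · intro i
      rw [lamOf_step, nextVal_lamOf]
      omega
    · rw [sum_lamOf]; exact hqsum c hc
  -- each term is large
  have hterm : ∀ c ∈ T, m ^ (2 * d) ≤ (SS d (F c)).card * ∏ j, pgap d (F c) j ^ 2 := by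
    intro c hc
    have hFc : F c = lamOf d (qf c) := rfl
    have hcard : 1 ≤ (SS d (F c)).card := by
      refine Finset.card_pos.2 ⟨z, ?_⟩
      rw [SS, Finset.mem_filter]
      refine ⟨Finset.mem_univ z, ?_⟩
      have h1 : lamOf d (qf c) z = qf c z + nextVal d (lamOf d (qf c)) z := by
        rw [lamOf_step, nextVal_lamOf]
      have h2 : m ≤ qf c z := hqm c hc z
      rw [hFc]
      omega
    have hprod : m ^ (2 * d) ≤ ∏ j, pgap d (F c) j ^ 2 := by
      have : ∀ j : Fin d, m ^ 2 ≤ pgap d (F c) j ^ 2 := by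
        intro j
        have : pgap d (F c) j = qf c j := by rw [hFc]; exact pgap_lamOf d (qf c) j
        rw [this]
        exact Nat.pow_le_pow_left (hqm c hc j) 2
      calc m ^ (2 * d) = ∏ _j : Fin d, m ^ 2 := by
            rw [Finset.prod_const, Finset.card_univ, Fintype.card_fin, ← pow_mul]
        _ ≤ ∏ j, pgap d (F c) j ^ 2 := Finset.prod_le_prod' fun j _ => this j
    calc m ^ (2 * d) = 1 * m ^ (2 * d) := (one_mul _).symm
      _ ≤ (SS d (F c)).card * ∏ j, pgap d (F c) j ^ 2 := Nat.mul_le_mul hcard hprod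
  -- injectivity
  have hinj : ∀ c ∈ T, ∀ c' ∈ T, F c = F c' → c = c' := by
    intro c hc c' hc' heq
    have hq : ∀ k : Fin d, qf c k = qf c' k := by
      intro k
      have h1 : pgap d (lamOf d (qf c)) k = pgap d (lamOf d (qf c')) k := by
        show pgap d (F c) k = pgap d (F c') k
        rw [heq]
      rwa [pgap_lamOf, pgap_lamOf] at h1
    funext k
    by_cases hk : k = z
    · subst hk; rw [hcz c hc, hcz c' hc']
    · have := hq k
      rwa [hqk c hc k hk, hqk c' hc' k hk] at this
  -- cardinality of T
  have hcardT : T.card = m ^ (d - 1) := by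
    rw [hT, Fintype.card_piFinset]
    have : ∀ i : Fin d, ((if i = z then ({0} : Finset ℕ) else Finset.Ico m (2 * m)).card)
        = if i = z then 1 else m := by
      intro i
      by_cases hi : i = z
      · simp [hi]
      · rw [if_neg hi, if_neg hi, Nat.card_Ico]
        omega
    rw [Finset.prod_congr rfl fun i _ => this i,
      ← Finset.prod_erase_mul Finset.univ _ (Finset.mem_univ z), if_pos rfl, mul_one,
      Finset.prod_congr rfl (fun i hi => if_neg (Finset.ne_of_mem_erase hi)),
      Finset.prod_const, Finset.card_erase_of_mem (Finset.mem_univ z)]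
    simp
  -- put it together
  calc m ^ (3 * (d - 1) + 2) = m ^ (d - 1) * m ^ (2 * d) := by
        rw [← pow_add]
        congr 1
        omega
    _ = ∑ _c ∈ T, m ^ (2 * d) := by rw [Finset.sum_const, smul_eq_mul, hcardT]
    _ ≤ ∑ c ∈ T, (SS d (F c)).card * ∏ j, pgap d (F c) j ^ 2 :=
        Finset.sum_le_sum fun c hc => hterm c hc
    _ = ∑ lam ∈ T.image F, (SS d lam).card * ∏ j, pgap d lam j ^ 2 := by
        rw [Finset.sum_image hinj]
    _ ≤ ∑ lam ∈ Lam d (N + 1), (SS d lam).card * ∏ j, pgap d lam j ^ 2 := by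
        apply Finset.sum_le_sum_of_subset
        intro lam hlam
        obtain ⟨c, hc, rfl⟩ := Finset.mem_image.1 hlam
        exact hmem c hc
lemma upper_bound (d N : ℕ) (hd : 2 ≤ d) :
    ∑ lam ∈ Lam d (N + 1), ∑ i ∈ SS d lam, rr d lam i ^ 2
      ≤ (((N + 2) ^ (d - 1) * (d * (9 * (N + 1) ^ (2 * (d - 1)))) : ℕ) : ℤ) := by
  have hterm : ∀ lam ∈ Lam d (N + 1), ∑ i ∈ SS d lam, rr d lam i ^ 2
      ≤ ((d * (9 * (N + 1) ^ (2 * (d - 1))) : ℕ) : ℤ) := by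
    intro lam hlam
    calc ∑ i ∈ SS d lam, rr d lam i ^ 2
        ≤ ∑ _i ∈ SS d lam, ((9 * (N + 1) ^ (2 * (d - 1)) : ℕ) : ℤ) :=
          Finset.sum_le_sum fun i _ => rr_sq_le hlam (by omega) i
      _ = (SS d lam).card • ((9 * (N + 1) ^ (2 * (d - 1)) : ℕ) : ℤ) := Finset.sum_const _
      _ ≤ ((d * (9 * (N + 1) ^ (2 * (d - 1))) : ℕ) : ℤ) := by
          rw [nsmul_eq_mul]
          push_cast
          have h1 : ((SS d lam).card : ℤ) ≤ (d : ℤ) := by exact_mod_cast card_SS_le lam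
          exact mul_le_mul_of_nonneg_right h1 (by positivity)
  calc ∑ lam ∈ Lam d (N + 1), ∑ i ∈ SS d lam, rr d lam i ^ 2
      ≤ (Lam d (N + 1)).card • ((d * (9 * (N + 1) ^ (2 * (d - 1))) : ℕ) : ℤ) :=
        Finset.sum_le_card_nsmul _ _ _ hterm
    _ ≤ (((N + 2) ^ (d - 1) * (d * (9 * (N + 1) ^ (2 * (d - 1)))) : ℕ) : ℤ) := by
        rw [nsmul_eq_mul]
        have h2 : ((Lam d (N + 1)).card : ℤ) ≤ (((N + 2) ^ (d - 1) : ℕ) : ℤ) := by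
          exact_mod_cast card_Lam_le (M := N + 1) (by omega)
        calc ((Lam d (N + 1)).card : ℤ) * ((d * (9 * (N + 1) ^ (2 * (d - 1))) : ℕ) : ℤ)
            ≤ (((N + 2) ^ (d - 1) : ℕ) : ℤ) * ((d * (9 * (N + 1) ^ (2 * (d - 1))) : ℕ) : ℤ) :=
              mul_le_mul_of_nonneg_right h2 (by positivity)
          _ = (((N + 2) ^ (d - 1) * (d * (9 * (N + 1) ^ (2 * (d - 1)))) : ℕ) : ℤ) := by
              push_cast; ring

lemma key_nat (d N : ℕ) (hd : 2 ≤ d) (hN : 8 * d ^ 2 ≤ N) :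
    (N + 2) ^ (d - 1) * (d * (9 * (N + 1) ^ (2 * (d - 1)))) * N ^ 2
      ≤ 9 * d * (16 * d ^ 2) ^ (3 * (d - 1) + 2) * (N / (4 * d ^ 2)) ^ (3 * (d - 1) + 2) := by
  set m := N / (4 * d ^ 2) with hm
  have hB : N ≤ 8 * (d ^ 2 * m) := by
    have h1 := Nat.div_add_mod N (4 * d ^ 2)
    have h2 : N % (4 * d ^ 2) < 4 * d ^ 2 := Nat.mod_lt N (by positivity)
    have h3 : 4 * d ^ 2 * (N / (4 * d ^ 2)) = 4 * (d ^ 2 * m) := by rw [← hm]; ring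
    set a := d ^ 2 * m
    set r := N % (4 * d ^ 2)
    have h5 : 2 * (4 * d ^ 2) ≤ N := by omega
    omega
  have hN2 : N + 2 ≤ 16 * d ^ 2 * m := by
    have h6 : 2 ≤ N := by nlinarith
    have h7 : 16 * d ^ 2 * m = 2 * (8 * (d ^ 2 * m)) := by ring
    omega
  calc (N + 2) ^ (d - 1) * (d * (9 * (N + 1) ^ (2 * (d - 1)))) * N ^ 2
      ≤ (N + 2) ^ (d - 1) * (d * (9 * (N + 2) ^ (2 * (d - 1)))) * (N + 2) ^ 2 := by
        have e1 : (N + 1) ^ (2 * (d - 1)) ≤ (N + 2) ^ (2 * (d - 1)) :=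
          Nat.pow_le_pow_left (by omega) _
        have e2 : N ^ 2 ≤ (N + 2) ^ 2 := Nat.pow_le_pow_left (by omega) _
        exact Nat.mul_le_mul (Nat.mul_le_mul_left _ (Nat.mul_le_mul_left _
          (Nat.mul_le_mul_left _ e1))) e2
    _ = 9 * d * (N + 2) ^ (3 * (d - 1) + 2) := by
        have he : 3 * (d - 1) + 2 = (d - 1) + 2 * (d - 1) + 2 := by omega
        rw [he, pow_add, pow_add]
        ring
    _ ≤ 9 * d * (16 * d ^ 2 * m) ^ (3 * (d - 1) + 2) :=
        Nat.mul_le_mul_left _ (Nat.pow_le_pow_left hN2 _)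
    _ = 9 * d * (16 * d ^ 2) ^ (3 * (d - 1) + 2) * m ^ (3 * (d - 1) + 2) := by
        rw [mul_pow]
        ring

/-- u₂ = O(1/N²): there are `K` and `N₀` such that for all `N ≥ N₀`,
`d·Σ_{λ'} Σ_{i∈S(λ')} r_{λ'}(i)² ≤ (K/N²)·d·Σ_{λ'} #S(λ')·∏_j p_j(λ')²`. -/
theorem stmt13 (d : ℕ) (hd : 2 ≤ d) :
    ∃ K : ℝ, ∃ N₀ : ℕ, ∀ N : ℕ, N₀ ≤ N →
      (d : ℝ) * ∑ lam' ∈ Lam d (N + 1), ∑ i ∈ SS d lam', (rr d lam' i : ℝ) ^ 2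
        ≤ (K / N ^ 2) * ((d : ℝ) * ∑ lam' ∈ Lam d (N + 1),
            ((SS d lam').card : ℝ) * ∏ j, (pgap d lam' j : ℝ) ^ 2) := by
  refine ⟨((9 * d * (16 * d ^ 2) ^ (3 * (d - 1) + 2) : ℕ) : ℝ), 8 * d ^ 2, ?_⟩
  intro N hN
  set Knat : ℕ := 9 * d * (16 * d ^ 2) ^ (3 * (d - 1) + 2) with hK
  set m := N / (4 * d ^ 2) with hm
  set e := 3 * (d - 1) + 2 with he
  set U : ℕ := (N + 2) ^ (d - 1) * (d * (9 * (N + 1) ^ (2 * (d - 1)))) with hU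
  have hN0 : 0 < N := by nlinarith
  have hNR : (0 : ℝ) < (N : ℝ) ^ 2 := by positivity
  set A : ℝ := ∑ lam' ∈ Lam d (N + 1), ∑ i ∈ SS d lam', (rr d lam' i : ℝ) ^ 2 with hA'
  set B : ℝ := ∑ lam' ∈ Lam d (N + 1), ((SS d lam').card : ℝ) * ∏ j, (pgap d lam' j : ℝ) ^ 2
    with hB'
  have hA : A ≤ (U : ℝ) := by
    have h1 := upper_bound d N hd
    have h2 : A = ((∑ lam ∈ Lam d (N + 1), ∑ i ∈ SS d lam, rr d lam i ^ 2 : ℤ) : ℝ) := by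
      rw [hA']; push_cast; rfl
    rw [h2]
    exact_mod_cast h1
  have hB : ((m ^ e : ℕ) : ℝ) ≤ B := by
    have h1 := lower_bound d N hd hN
    have h2 : B = ((∑ lam ∈ Lam d (N + 1), (SS d lam).card * ∏ j, pgap d lam j ^ 2 : ℕ) : ℝ) := by
      rw [hB']; push_cast; rfl
    rw [h2]
    exact_mod_cast h1
  have hkey : U * N ^ 2 ≤ Knat * m ^ e := key_nat d N hd hN
  have step1 : (U : ℝ) ≤ (Knat : ℝ) * ((m ^ e : ℕ) : ℝ) / (N : ℝ) ^ 2 := by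
    rw [le_div_iff₀ hNR]
    exact_mod_cast hkey
  have step2 : (Knat : ℝ) * ((m ^ e : ℕ) : ℝ) / (N : ℝ) ^ 2 ≤ (Knat : ℝ) / (N : ℝ) ^ 2 * B := by
    calc (Knat : ℝ) * ((m ^ e : ℕ) : ℝ) / (N : ℝ) ^ 2
        = (Knat : ℝ) / (N : ℝ) ^ 2 * ((m ^ e : ℕ) : ℝ) := by ring
      _ ≤ (Knat : ℝ) / (N : ℝ) ^ 2 * B := by
          apply mul_le_mul_of_nonneg_left hB
          positivity
  calc (d : ℝ) * A ≤ (d : ℝ) * ((Knat : ℝ) / (N : ℝ) ^ 2 * B) := by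
        apply mul_le_mul_of_nonneg_left (hA.trans (step1.trans step2))
        positivity
    _ = (Knat : ℝ) / (N : ℝ) ^ 2 * ((d : ℝ) * B) := by ring
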